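/- arXiv:1302.6762 — 2 statements merged into one kernel-verified Lean document; each statement's English description precedes it below -/
import Mathlib

section
/- Let H, θ ∈ ℝ with θ ∉ {η₁, …, η_m}. Let B = diag(e^{β₁ H}, …, e^{β_{m+1} H}) and let J be the column vector J = e^{θH} (1, η₁/(η₁ − θ), …, η_m/(η_m − θ))ᵀ. Then the linear system A B w = J has a unique solution w = (w₁, …, w_{m+1})ᵀ, given by w_k = e^{θH} · [∏_{j=1}^m (1 − β_k/η_j) / ∏_{j=1, j≠k}^{m+1} (1 − β_k/β_j)] · [∏_{i=1, i≠k}^{m+1} (1 − θ/β_i) / ∏_{i=1}^m (1 − θ/η_i)] · e^{−β_k H} for k = 1, …, m+1. -/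
/-! Put `u = B w`. Lagrange interpolation at the nodes `β` reproduces every polynomial of degree
`≤ m`; applied to `∏_{j ∈ s} (x - η j)` with `s = univ` and `s = univ.erase i` it shows that
`u k = e^{θH} ∏_j (β k - η j) / ∏_j (θ - η j) · ℓ_k(θ)`, with `ℓ_k` the Lagrange basis, solves
`A u = J`, and factor by factor this is the claimed formula.
For uniqueness, if `v A = 0` then `∏_j (x - η j) · (v 0 + ∑_i v (i+1) η i / (η i - x))` is a
polynomial of degree `≤ m` vanishing at the `m + 1` nodes `β k`, hence zero; evaluating it at
`η r` kills `v (r+1)`, and then the first column kills `v 0`. -/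

open Finset Polynomial Matrix

namespace Lagrange

variable {F : Type*} [Field F] {ι : Type*} [DecidableEq ι] {s : Finset ι} {v : ι → F}

theorem eval_eq_sum_eval_mul_eval_basis (hvs : Set.InjOn v s) {f : F[X]} (hf : f.degree < #s)
    (x : F) : f.eval x = ∑ i ∈ s, f.eval (v i) * (Lagrange.basis s v i).eval x := by
  conv_lhs => rw [eq_interpolate hvs hf]
  simp only [interpolate_apply, eval_finsetSum, eval_mul, eval_C]

theorem eval_basis (i : ι) (x : F) :
    (Lagrange.basis s v i).eval x = ∏ j ∈ s.erase i, (x - v j) / (v i - v j) := by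
  simp only [Lagrange.basis, basisDivisor, eval_prod, eval_mul, eval_C, eval_sub, eval_X]
  exact prod_congr rfl fun j _ => inv_mul_eq_div _ _

end Lagrange

section BorderedCauchy

variable {F : Type*} [Field F] {m : ℕ} (η : Fin m → F) (β : Fin (m + 1) → F) (θ : F)

def borderedCauchy : Matrix (Fin (m + 1)) (Fin (m + 1)) F :=
  Matrix.of (Fin.cons (fun _ => 1) fun i j => η i / (η i - β j))

noncomputable def cauchyWeight (k : Fin (m + 1)) : F :=
  (∏ j, (β k - η j)) / (∏ j, (θ - η j)) * (Lagrange.basis univ β k).eval θ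

variable {η β θ}

lemma prod_sub_mul_div_sub {x : F} (i : Fin m) (hx : η i ≠ x) :
    (∏ j, (x - η j)) * (η i / (η i - x)) = -(η i * ∏ j ∈ univ.erase i, (x - η j)) := by
  rw [← mul_prod_erase univ _ (mem_univ i)]
  field_simp [sub_ne_zero.mpr hx]
  ring

lemma sum_prod_sub_mul_eval_basis (hβ : Function.Injective β) (s : Finset (Fin m)) :
    ∑ k, (∏ j ∈ s, (β k - η j)) * (Lagrange.basis univ β k).eval θ = ∏ j ∈ s, (θ - η j) := by
  have hdeg : (Lagrange.nodal s η).degree < #(univ : Finset (Fin (m + 1))) := by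
    rw [Lagrange.degree_nodal, card_univ, Fintype.card_fin]
    exact_mod_cast (card_le_univ s).trans_lt (by simp)
  simpa only [Lagrange.eval_nodal] using
    (Lagrange.eval_eq_sum_eval_mul_eval_basis hβ.injOn hdeg θ).symm

lemma sum_cauchyWeight (hβ : Function.Injective β) (hθ : ∀ i, θ ≠ η i) :
    ∑ k, cauchyWeight η β θ k = 1 := by
  have hT : ∏ j, (θ - η j) ≠ 0 := prod_ne_zero_iff.mpr fun j _ => sub_ne_zero.mpr (hθ j)
  simp only [cauchyWeight, div_mul_eq_mul_div, ← sum_div, sum_prod_sub_mul_eval_basis hβ,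
    div_self hT]

lemma sum_div_sub_mul_cauchyWeight (hβ : Function.Injective β) (hθ : ∀ i, θ ≠ η i)
    (hβη : ∀ i j, β j ≠ η i) (i : Fin m) :
    ∑ k, η i / (η i - β k) * cauchyWeight η β θ k = η i / (η i - θ) := by
  have hT : ∏ j, (θ - η j) ≠ 0 := prod_ne_zero_iff.mpr fun j _ => sub_ne_zero.mpr (hθ j)
  have hterm : ∀ k, η i / (η i - β k) * cauchyWeight η β θ k =
      -η i * ((∏ j ∈ univ.erase i, (β k - η j)) * (Lagrange.basis univ β k).eval θ) /
        ∏ j, (θ - η j) := fun k => by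
    rw [cauchyWeight, ← mul_assoc, mul_div_assoc', mul_comm (η i / _),
      prod_sub_mul_div_sub i (hβη i k).symm]
    ring
  rw [sum_congr rfl fun k _ => hterm k, ← sum_div, ← mul_sum, sum_prod_sub_mul_eval_basis hβ,
    neg_mul, ← prod_sub_mul_div_sub i (hθ i).symm, mul_div_cancel_left₀ _ hT]

lemma borderedCauchy_mulVec_cauchyWeight (hβ : Function.Injective β) (hθ : ∀ i, θ ≠ η i)
    (hβη : ∀ i j, β j ≠ η i) :
    borderedCauchy η β *ᵥ cauchyWeight η β θ = Fin.cons 1 fun i => η i / (η i - θ) := by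
  ext r
  induction r using Fin.cases with
  | zero => simpa [borderedCauchy, Matrix.mulVec, dotProduct] using sum_cauchyWeight hβ hθ
  | succ i =>
    simpa [borderedCauchy, Matrix.mulVec, dotProduct] using
      sum_div_sub_mul_cauchyWeight hβ hθ hβη i

lemma natDegree_C_mul_nodal_le (a : F) (s : Finset (Fin m)) :
    (C a * Lagrange.nodal s η).natDegree ≤ m :=
  (natDegree_C_mul_le _ _).trans (Lagrange.natDegree_nodal.trans_le (card_le_univ s |>.trans_eq
    (Fintype.card_fin m)))

lemma det_borderedCauchy_ne_zero (hη : Function.Injective η) (hη0 : ∀ i, η i ≠ 0)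
    (hβ : Function.Injective β) (hβη : ∀ i j, β j ≠ η i) : (borderedCauchy η β).det ≠ 0 := by
  rw [Ne, ← exists_vecMul_eq_zero_iff]
  rintro ⟨v, hv0, hv⟩
  refine hv0 ?_
  have hrow : ∀ k, v 0 + ∑ i, v i.succ * (η i / (η i - β k)) = 0 := fun k => by
    simpa [borderedCauchy, vecMul, dotProduct, Fin.sum_univ_succ] using congrFun hv k
  set N : F[X] := C (v 0) * Lagrange.nodal univ η -
    ∑ i, C (v i.succ * η i) * Lagrange.nodal (univ.erase i) η
  have hN_eval : ∀ x, N.eval x = v 0 * ∏ j, (x - η j) -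
      ∑ i, v i.succ * η i * ∏ j ∈ univ.erase i, (x - η j) := fun x => by
    simp [N, eval_finsetSum, Lagrange.eval_nodal]
  have hN : N = 0 := by
    refine eq_zero_of_degree_lt_of_eval_index_eq_zero univ hβ.injOn ?_ fun k _ => ?_
    · rw [card_univ, Fintype.card_fin]
      refine (natDegree_le_iff_degree_le.mp ?_).trans_lt (by exact_mod_cast Nat.lt_succ_self m)
      exact (natDegree_sub_le_of_le (natDegree_C_mul_nodal_le _ _)
        (natDegree_sum_le_of_forall_le _ _ fun i _ => natDegree_C_mul_nodal_le _ _)).trans_eq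
          (max_self m)
    · rw [hN_eval, ← mul_zero (∏ j, (β k - η j)), ← hrow k, mul_add, mul_sum, sub_eq_add_neg,
        ← sum_neg_distrib, mul_comm (v 0)]
      congr 1
      refine sum_congr rfl fun i _ => ?_
      rw [mul_left_comm, prod_sub_mul_div_sub i (hβη i k).symm]
      ring
  have hsucc : ∀ r : Fin m, v r.succ = 0 := fun r => by
    have h := hN_eval (η r)
    rw [hN, eval_zero, prod_eq_zero (mem_univ r) (sub_self _), mul_zero, zero_sub,
      sum_eq_single r (fun i _ hir => ?_) (by simp), eq_comm, neg_eq_zero] at h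
    · have hprod : ∏ j ∈ univ.erase r, (η r - η j) ≠ 0 :=
        prod_ne_zero_iff.mpr fun j hj => sub_ne_zero.mpr fun e => (mem_erase.mp hj).1 (hη e).symm
      simpa [hη0 r, hprod] using h
    · rw [prod_eq_zero (mem_erase.mpr ⟨Ne.symm hir, mem_univ r⟩) (sub_self _), mul_zero]
  ext k
  induction k using Fin.cases with
  | zero => simpa [hsucc] using hrow 0
  | succ i => exact hsucc i

lemma one_sub_div_div_one_sub_div {a b c : F} (hc : c ≠ 0) :
    (1 - a / c) / (1 - b / c) = (a - c) / (b - c) := by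
  rw [one_sub_div hc, one_sub_div hc, div_div_div_cancel_right₀ hc, ← neg_sub a c, ← neg_sub b c,
    neg_div_neg_eq]

lemma cauchyWeight_eq (hη0 : ∀ i, η i ≠ 0) (hβ0 : ∀ j, β j ≠ 0) (k : Fin (m + 1)) :
    cauchyWeight η β θ k =
      (∏ j, (1 - β k / η j)) / (∏ j ∈ univ.erase k, (1 - β k / β j)) *
        ((∏ i ∈ univ.erase k, (1 - θ / β i)) / ∏ i, (1 - θ / η i)) := by
  rw [cauchyWeight, Lagrange.eval_basis, div_mul_div_comm, mul_comm (∏ j ∈ univ.erase k, _),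
    ← div_mul_div_comm]
  simp only [← prod_div_distrib, one_sub_div_div_one_sub_div (hη0 _),
    one_sub_div_div_one_sub_div (hβ0 _)]

end BorderedCauchy

theorem stmt_16_general (m : ℕ)
    (η : Fin m → ℝ) (hη : StrictMono η) (hηpos : ∀ i, 0 < η i)
    (β : Fin (m + 1) → ℝ) (hβinj : Function.Injective β) (hβpos : ∀ j, 0 < β j)
    (hβη : ∀ i j, β j ≠ η i)
    (H θ : ℝ) (hθ : ∀ i, θ ≠ η i)
    (A : Matrix (Fin (m + 1)) (Fin (m + 1)) ℝ)
    (hA : A = Matrix.of (Fin.cons (fun _ => (1 : ℝ)) (fun i j => η i / (η i - β j))))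
    (B : Matrix (Fin (m + 1)) (Fin (m + 1)) ℝ)
    (hB : B = Matrix.diagonal fun j => Real.exp (β j * H))
    (Jv : Fin (m + 1) → ℝ)
    (hJ : Jv = Fin.cons (Real.exp (θ * H)) fun i => Real.exp (θ * H) * (η i / (η i - θ))) :
    ∀ w : Fin (m + 1) → ℝ,
      (A * B).mulVec w = Jv ↔
        w = fun k =>
          Real.exp (θ * H) *
            ((∏ j, (1 - β k / η j)) / ∏ j ∈ univ.erase k, (1 - β k / β j)) *
            ((∏ i ∈ univ.erase k, (1 - θ / β i)) / ∏ i, (1 - θ / η i)) *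
            Real.exp (-(β k) * H) := by
  have hη0 : ∀ i, η i ≠ 0 := fun i => (hηpos i).ne'
  have hβ0 : ∀ j, β j ≠ 0 := fun j => (hβpos j).ne'
  have hA' : A = borderedCauchy η β := hA
  have hAB : IsUnit (A * B) := by
    rw [hA', hB]
    refine .mul ?_ (isUnit_diagonal.mpr (Pi.isUnit_iff.mpr fun j => (Real.exp_ne_zero _).isUnit))
    exact (isUnit_iff_isUnit_det _).mpr
      (det_borderedCauchy_ne_zero hη.injective hη0 hβinj hβη).isUnit
  set w₀ : Fin (m + 1) → ℝ := fun k =>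
    Real.exp (θ * H) * cauchyWeight η β θ k * Real.exp (-β k * H)
  have hw₀ : B *ᵥ w₀ = Real.exp (θ * H) • cauchyWeight η β θ := funext fun k => by
    rw [hB, mulVec_diagonal, Pi.smul_apply, smul_eq_mul, mul_comm, mul_assoc, ← Real.exp_add]
    simp
  have hsol : (A * B) *ᵥ w₀ = Jv := by
    rw [← mulVec_mulVec, hw₀, mulVec_smul, hA', borderedCauchy_mulVec_cauchyWeight hβinj hθ hβη,
      hJ]
    ext r
    induction r using Fin.cases <;> simp
  intro w
  rw [show (fun k => _) = w₀ from
    funext fun k => by simp only [w₀, cauchyWeight_eq hη0 hβ0, mul_assoc]]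
  exact ⟨fun h => mulVec_injective_iff_isUnit.mpr hAB (h.trans hsol.symm), fun h => h ▸ hsol⟩

/-- unique solution of the linear system `A B w = J`. -/
theorem stmt_16 (m : ℕ) (hm : 0 < m)
    (η : Fin m → ℝ) (hη : StrictMono η) (hηpos : ∀ i, 0 < η i)
    (β : Fin (m + 1) → ℝ) (hβinj : Function.Injective β) (hβpos : ∀ j, 0 < β j)
    (hβη : ∀ i j, β j ≠ η i)
    (H θ : ℝ) (hθ : ∀ i, θ ≠ η i)
    (A : Matrix (Fin (m + 1)) (Fin (m + 1)) ℝ)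
    (hA : A = Matrix.of (Fin.cons (fun _ => (1 : ℝ)) (fun i j => η i / (η i - β j))))
    (B : Matrix (Fin (m + 1)) (Fin (m + 1)) ℝ)
    (hB : B = Matrix.diagonal fun j => Real.exp (β j * H))
    (Jv : Fin (m + 1) → ℝ)
    (hJ : Jv = Fin.cons (Real.exp (θ * H)) fun i => Real.exp (θ * H) * (η i / (η i - θ))) :
    ∀ w : Fin (m + 1) → ℝ,
      (A * B).mulVec w = Jv ↔
        w = fun k =>
          Real.exp (θ * H) *
            ((∏ j, (1 - β k / η j)) / ∏ j ∈ univ.erase k, (1 - β k / β j)) *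
            ((∏ i ∈ univ.erase k, (1 - θ / β i)) / ∏ i, (1 - θ / η i)) *
            Real.exp (-(β k) * H) :=
  stmt_16_general m η hη hηpos β hβinj hβpos hβη H θ hθ A hA B hB Jv hJ
end

section
/- Partition A as A = [[A₁₁, A₁₂], [A₂₁, A₂₂]], where A₁₁ = (1) is the top-left 1×1 block, A₁₂ = (1, …, 1) is 1×m, A₂₁ = (η₁/(η₁ − β₁), …, η_m/(η_m − β₁))ᵀ, and A₂₂ = (η_i/(η_i − β_{j+1}))_{1≤i,j≤m}. Then A₂₂ is invertible, the Schur complement satisfies A₁₁ − A₁₂ A₂₂⁻¹ A₂₁ = ∏_{i=1}^m (β_{i+1} − β₁) / ∏_{i=1}^m (η_i − β₁), and consequently det A = det(A₂₂) · ∏_{i=1}^m (β_{i+1} − β₁) / ∏_{i=1}^m (η_i − β₁) ≠ 0. -/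
/-!
`A₂₂` is `diagonal η` times the Cauchy matrix `((η i - β (j + 1))⁻¹)`. A kernel vector `v` of a
Cauchy matrix `((x i - y j)⁻¹)` gives the polynomial `Q = ∑ j, v j ∏_{k ≠ j} (X - y k)` of degree
`< m` vanishing at the `m` distinct `x i`, so `Q = 0`, and `Q (y j) = v j ∏_{k ≠ j} (y j - y k)`
forces `v = 0`; hence `det A₂₂ ≠ 0`.

Subtracting the first column of `A` from the others clears its first row except for the corner `1`,
and leaves the minor `diagonal (η i - β 0)⁻¹ * A₂₂ * diagonal (β (j + 1) - β 0)`. This computes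
`det A`; comparing with the Schur complement formula `det A = det A₂₂ * (1 - A₁₂ A₂₂⁻¹ A₂₁)` and
cancelling `det A₂₂` gives the value of the Schur complement.
-/

open Finset Matrix Polynomial

namespace Matrix

section Cauchy

variable {K : Type*} [Field K] {ι : Type*} [Fintype ι] [DecidableEq ι]

theorem det_cauchy_ne_zero {x y : ι → K} (hx : Function.Injective x)
    (hy : Function.Injective y) (hxy : ∀ i j, x i ≠ y j) :
    (of fun i j => (x i - y j)⁻¹).det ≠ 0 := by
  intro hdet
  obtain ⟨v, hv, hMv⟩ := exists_mulVec_eq_zero_iff.mpr hdet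
  obtain ⟨j₀, hj₀⟩ := Function.ne_iff.mp hv
  -- `Q / nodal univ y = ∑ j, v j / (X - y j)` vanishes at every `x i`
  set Q : K[X] := ∑ j, C (v j) * Lagrange.nodal (univ.erase j) y
  have hQdeg : Q.natDegree < Fintype.card ι := by
    have hpos := Fintype.card_pos_iff.mpr ⟨j₀⟩
    refine lt_of_le_of_lt (natDegree_sum_le_of_forall_le _ _ fun j _ => ?_)
      (Nat.sub_lt hpos one_pos)
    refine (natDegree_C_mul_le _ _).trans ?_
    rw [Lagrange.natDegree_nodal, card_erase_of_mem (mem_univ j), card_univ]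
  have hQx : ∀ i, Q.eval (x i) = 0 := by
    intro i
    have hnodal : ∀ j, (x i - y j) * (Lagrange.nodal (univ.erase j) y).eval (x i) =
        (Lagrange.nodal univ y).eval (x i) := fun j => by
      rw [Lagrange.nodal_eq_mul_nodal_erase (mem_univ j), eval_mul]; simp
    have hrow : ∑ j, (x i - y j)⁻¹ * v j = 0 := by simpa [mulVec, dotProduct] using congrFun hMv i
    calc Q.eval (x i) = (Lagrange.nodal univ y).eval (x i) * ∑ j, (x i - y j)⁻¹ * v j := by
          simp only [Q, eval_finsetSum, eval_mul, eval_C, mul_sum]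
          refine sum_congr rfl fun j _ => ?_
          rw [← hnodal j]
          field_simp [sub_ne_zero.mpr (hxy i j)]
      _ = 0 := by rw [hrow, mul_zero]
  have hQ : Q = 0 := eq_zero_of_natDegree_lt_card_of_eval_eq_zero Q hx hQx hQdeg
  apply hj₀
  have hQy := congrArg (eval (y j₀)) hQ
  rw [eval_zero, eval_finsetSum, sum_eq_single j₀] at hQy
  · refine (mul_eq_zero.mp (by simpa using hQy)).resolve_right ?_
    exact Lagrange.eval_nodal_not_at_node fun k hk => fun h => (mem_erase.mp hk).1 (hy h).symm
  · intro k _ hk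
    rw [eval_mul, Lagrange.eval_nodal_at_node (mem_erase.mpr ⟨Ne.symm hk, mem_univ j₀⟩), mul_zero]
  · simp

theorem det_of_div_sub_ne_zero {x y : ι → K} (hx : Function.Injective x)
    (hy : Function.Injective y) (hx₀ : ∀ i, x i ≠ 0) (hxy : ∀ i j, x i ≠ y j) :
    (of fun i j => x i / (x i - y j)).det ≠ 0 := by
  have hfactor : (of fun i j => x i / (x i - y j)) = diagonal x * of fun i j => (x i - y j)⁻¹ := by
    ext i j
    simp [div_eq_mul_inv]
  rw [hfactor, det_mul, det_diagonal]
  exact mul_ne_zero (prod_ne_zero_iff.mpr fun i _ => hx₀ i) (det_cauchy_ne_zero hx hy hxy)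

end Cauchy

section FirstRow

variable {R : Type*} [CommRing R] {n : ℕ}

theorem det_eq_det_sub_col_zero_of_row_zero_eq_one (A : Matrix (Fin (n + 1)) (Fin (n + 1)) R)
    (hA : ∀ j, A 0 j = 1) : A.det = (of fun i j : Fin n => A i.succ j.succ - A i.succ 0).det := by
  set B : Matrix (Fin (n + 1)) (Fin (n + 1)) R := of fun i j => A i j - if j = 0 then 0 else A i 0
  have hAB : A.det = B.det := by
    rw [← det_transpose A, ← det_transpose B]
    refine det_eq_of_forall_row_eq_smul_add_const (fun j => if j = 0 then 0 else 1) 0 rfl ?_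
    intro j i
    by_cases hj : j = 0 <;> simp [B, hj]
  rw [hAB, det_succ_row_zero, sum_eq_single 0]
  · simp [B, hA, submatrix]
  · intro j _ hj
    simp [B, hA, hj]
  · simp

theorem det_succ_eq_det_submatrix_succ_mul_schur (A : Matrix (Fin (n + 1)) (Fin (n + 1)) R)
    (hA : IsUnit (A.submatrix Fin.succ Fin.succ).det) :
    A.det = (A.submatrix Fin.succ Fin.succ).det *
      (A 0 0 -
        (fun j => A 0 j.succ) ⬝ᵥ ((A.submatrix Fin.succ Fin.succ)⁻¹ *ᵥ fun i => A i.succ 0)) := by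
  set D := A.submatrix Fin.succ Fin.succ
  have := D.invertibleOfIsUnitDet hA
  let e : Fin (n + 1) ≃ Fin n ⊕ Unit := (finSuccEquiv n).trans (Equiv.optionEquivSumPUnit _)
  have hblocks : A = (fromBlocks D (of fun i _ => A i.succ 0) (of fun _ j => A 0 j.succ)
      (of fun _ _ => A 0 0)).submatrix e e := by
    ext i j
    cases i using Fin.cases <;> cases j using Fin.cases <;> simp [e, D]
  conv_lhs => rw [hblocks]
  rw [det_submatrix_equiv_self, det_fromBlocks₁₁, det_unique (n := Unit), invOf_eq_nonsing_inv]
  simp only [PUnit.default_eq_unit, sub_apply, of_apply, mul_apply, sum_mul, mul_assoc, dotProduct,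
    mulVec, mul_sum]
  rw [sum_comm]

end FirstRow

end Matrix

theorem stmt_17_general (m : ℕ)
    (η : Fin m → ℝ) (hη : StrictMono η) (hηpos : ∀ i, 0 < η i)
    (β : Fin (m + 1) → ℝ) (hβinj : Function.Injective β)
    (hβη : ∀ i j, β j ≠ η i)
    (A : Matrix (Fin (m + 1)) (Fin (m + 1)) ℝ)
    (hA : A = Matrix.of (Fin.cons (fun _ => (1 : ℝ)) (fun i j => η i / (η i - β j))))
    (A12 : Fin m → ℝ) (hA12 : A12 = fun _ => (1 : ℝ))
    (A21 : Fin m → ℝ) (hA21 : A21 = fun i => η i / (η i - β 0))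
    (A22 : Matrix (Fin m) (Fin m) ℝ)
    (hA22 : A22 = Matrix.of fun i j => η i / (η i - β j.succ)) :
    IsUnit A22.det ∧
    1 - A12 ⬝ᵥ (A22⁻¹.mulVec A21) =
      (∏ i : Fin m, (β i.succ - β 0)) / ∏ i, (η i - β 0) ∧
    A.det = A22.det * ((∏ i : Fin m, (β i.succ - β 0)) / ∏ i, (η i - β 0)) ∧
    A.det ≠ 0 := by
  have hsub : ∀ i j, η i - β j ≠ 0 := fun i j => sub_ne_zero.mpr (hβη i j).symm
  have hA22unit : IsUnit A22.det := by
    rw [hA22, isUnit_iff_ne_zero]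
    exact det_of_div_sub_ne_zero hη.injective (hβinj.comp (Fin.succ_injective m))
      (fun i => (hηpos i).ne') fun i j => (hβη i j.succ).symm
  have hq : (∏ i : Fin m, (β i.succ - β 0)) / ∏ i, (η i - β 0) ≠ 0 :=
    div_ne_zero (prod_ne_zero_iff.mpr fun i _ => sub_ne_zero.mpr (hβinj.ne (Fin.succ_ne_zero i)))
      (prod_ne_zero_iff.mpr fun i _ => hsub i 0)
  have hdetA : A.det = A22.det * ((∏ i : Fin m, (β i.succ - β 0)) / ∏ i, (η i - β 0)) := by
    have hminor : (of fun i j : Fin m => A i.succ j.succ - A i.succ 0) =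
        diagonal (fun i => (η i - β 0)⁻¹) * A22 * diagonal fun j => β j.succ - β 0 := by
      ext i j
      simp only [hA, of_apply, Fin.cons_succ, hA22, mul_diagonal, diagonal_mul]
      field_simp [hsub i j.succ, hsub i 0]
      ring
    rw [det_eq_det_sub_col_zero_of_row_zero_eq_one A (by simp [hA]), hminor, det_mul, det_mul,
      det_diagonal, det_diagonal, prod_inv_distrib]
    ring
  have hschur : A.det = A22.det * (1 - A12 ⬝ᵥ (A22⁻¹ *ᵥ A21)) := by
    have hD : A.submatrix Fin.succ Fin.succ = A22 := by ext; simp [hA, hA22]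
    have h00 : A 0 0 = 1 := by simp [hA]
    have hrow : (fun j => A 0 j.succ) = A12 := by ext; simp [hA, hA12]
    have hcol : (fun i => A i.succ 0) = A21 := by ext; simp [hA, hA21]
    simpa only [hD, h00, hrow, hcol] using
      det_succ_eq_det_submatrix_succ_mul_schur A (hD ▸ hA22unit)
  exact ⟨hA22unit, mul_left_cancel₀ hA22unit.ne_zero (hschur.symm.trans hdetA), hdetA,
    hdetA ▸ mul_ne_zero hA22unit.ne_zero hq⟩

/-- invertibility of `A₂₂`, the value of the Schur complement of `A₂₂` in `A`,
and the resulting determinant formula for `A`. -/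
theorem stmt_17 (m : ℕ) (hm : 0 < m)
    (η : Fin m → ℝ) (hη : StrictMono η) (hηpos : ∀ i, 0 < η i)
    (β : Fin (m + 1) → ℝ) (hβinj : Function.Injective β) (hβpos : ∀ j, 0 < β j)
    (hβη : ∀ i j, β j ≠ η i)
    (A : Matrix (Fin (m + 1)) (Fin (m + 1)) ℝ)
    (hA : A = Matrix.of (Fin.cons (fun _ => (1 : ℝ)) (fun i j => η i / (η i - β j))))
    (A12 : Fin m → ℝ) (hA12 : A12 = fun _ => (1 : ℝ))
    (A21 : Fin m → ℝ) (hA21 : A21 = fun i => η i / (η i - β 0))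
    (A22 : Matrix (Fin m) (Fin m) ℝ)
    (hA22 : A22 = Matrix.of fun i j => η i / (η i - β j.succ)) :
    IsUnit A22.det ∧
    1 - A12 ⬝ᵥ (A22⁻¹.mulVec A21) =
      (∏ i : Fin m, (β i.succ - β 0)) / ∏ i, (η i - β 0) ∧
    A.det = A22.det * ((∏ i : Fin m, (β i.succ - β 0)) / ∏ i, (η i - β 0)) ∧
    A.det ≠ 0 :=
  stmt_17_general m η hη hηpos β hβinj hβη A hA A12 hA12 A21 hA21 A22 hA22
end
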